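/- Let H be a real Hilbert space and T > 0. Let g : [0, T] → H be Bochner integrable with ∫₀^T ‖g(t)‖² dt < ∞, let f : [0, T] → H satisfy f(t) = f(0) + ∫₀^t g(s) ds for all t ∈ [0, T], and let M = sup_{t ∈ [0, T]} ‖f(t)‖. Then for every τ ≥ 0 and h ≥ 0 with τ + h ≤ T, one has |∫_τ^{τ+h} ‖f(t)‖² dt − h·‖f(τ)‖²| ≤ 2·h^{3/2}·M·(∫₀^T ‖g(t)‖² dt)^{1/2}. -/

import Mathlib

/-!
By Cauchy–Schwarz, `‖f t - f τ‖ = ‖∫_τ^t g‖ ≤ (t - τ)^{1/2} ‖g‖_{L²}`, so `f` is `1/2`-Hölder.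
Since `|‖x‖² - ‖y‖²| ≤ 2M‖x - y‖` when `‖x‖, ‖y‖ ≤ M`, the integrand `‖f t‖²` stays within
`2M h^{1/2} ‖g‖_{L²}` of `‖f τ‖²` on `[τ, τ + h]`; integrating over this interval of length `h`
gives the bound.
-/

open MeasureTheory Set

theorem norm_integral_le_rpow_measureReal_mul_rpow_integral_sq_norm
    {α E : Type*} [MeasurableSpace α] [NormedAddCommGroup E] [NormedSpace ℝ E]
    {μ : Measure α} [IsFiniteMeasure μ] {g : α → E} (hg : AEStronglyMeasurable g μ)
    (hg2 : Integrable (fun x => ‖g x‖ ^ 2) μ) :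
    ‖∫ x, g x ∂μ‖ ≤ μ.real univ ^ (1 / 2 : ℝ) * (∫ x, ‖g x‖ ^ 2 ∂μ) ^ (1 / 2 : ℝ) := by
  have hg2' : MemLp (fun x => ‖g x‖) (ENNReal.ofReal 2) μ := by
    rw [ENNReal.ofReal_ofNat, memLp_two_iff_integrable_sq hg.norm]
    exact hg2
  have holder := integral_mul_le_Lp_mul_Lq_of_nonneg (μ := μ) Real.HolderConjugate.two_two
    (ae_of_all _ fun _ => zero_le_one) (ae_of_all _ fun x => norm_nonneg (g x))
    (memLp_const 1) hg2'
  simp only [one_mul, one_pow, integral_const, smul_eq_mul, mul_one, Real.rpow_ofNat] at holder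
  exact (norm_integral_le_integral_norm g).trans holder

theorem abs_sq_norm_sub_sq_norm_le {E : Type*} [SeminormedAddCommGroup E] {x y : E} {M : ℝ}
    (hx : ‖x‖ ≤ M) (hy : ‖y‖ ≤ M) : |‖x‖ ^ 2 - ‖y‖ ^ 2| ≤ 2 * M * ‖x - y‖ := by
  rw [sq_sub_sq, abs_mul, abs_of_nonneg (by positivity)]
  gcongr
  · linarith [norm_nonneg x]
  · linarith
  · exact abs_norm_sub_norm_le x y

theorem abs_intervalIntegral_sub_mul_le {φ : ℝ → ℝ} {a b c C : ℝ} (hab : a ≤ b)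
    (hφ : IntervalIntegrable φ volume a b) (hC : ∀ t ∈ Ioc a b, |φ t - c| ≤ C) :
    |(∫ t in a..b, φ t) - (b - a) * c| ≤ C * (b - a) := by
  have hconst : (b - a) * c = ∫ _ in a..b, c := by simp
  rw [hconst, ← intervalIntegral.integral_sub hφ intervalIntegrable_const]
  have := intervalIntegral.norm_integral_le_of_norm_le_const (a := a) (b := b)
    (f := fun t => φ t - c) (C := C) (by rwa [uIoc_of_le hab])
  rwa [Real.norm_eq_abs, abs_of_nonneg (sub_nonneg.2 hab)] at this

theorem IsCompact.norm_le_iSup_of_continuousOn {X E : Type*} [TopologicalSpace X]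
    [SeminormedAddCommGroup E] {K : Set X} {f : X → E} (hK : IsCompact K)
    (hf : ContinuousOn f K) {t : X} (ht : t ∈ K) : ‖f t‖ ≤ ⨆ s : K, ‖f s‖ := by
  have hbdd := hK.bddAbove_image hf.norm
  rw [image_eq_range] at hbdd
  exact le_ciSup hbdd ⟨t, ht⟩

section Primitive

variable {E : Type*} [NormedAddCommGroup E] [NormedSpace ℝ E] {g f : ℝ → E} {T : ℝ}

theorem continuousOn_of_eq_add_primitive (hg : IntegrableOn g (Icc 0 T))
    (hf : ∀ t ∈ Icc (0 : ℝ) T, f t = f 0 + ∫ s in (0 : ℝ)..t, g s) :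
    ContinuousOn f (Icc 0 T) := by
  refine ((continuousOn_const (c := f 0)).add (intervalIntegral.continuousOn_primitive hg)).congr
    fun t ht => ?_
  rw [hf t ht, intervalIntegral.integral_of_le ht.1, Pi.add_apply]

theorem sub_eq_intervalIntegral_of_eq_add_primitive (hg : IntegrableOn g (Icc 0 T))
    (hf : ∀ t ∈ Icc (0 : ℝ) T, f t = f 0 + ∫ s in (0 : ℝ)..t, g s) {s t : ℝ}
    (hs : s ∈ Icc 0 T) (ht : t ∈ Icc 0 T) : f t - f s = ∫ u in s..t, g u := by
  have h0 : (0 : ℝ) ∈ Icc 0 T := ⟨le_rfl, hs.1.trans hs.2⟩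
  rw [hf t ht, hf s hs, add_sub_add_left_eq_sub]
  exact intervalIntegral.integral_interval_sub_left
    (hg.mono_set (uIcc_subset_Icc h0 ht)).intervalIntegrable
    (hg.mono_set (uIcc_subset_Icc h0 hs)).intervalIntegrable

theorem norm_sub_le_of_eq_add_primitive (hg : IntegrableOn g (Icc 0 T))
    (hg2 : IntegrableOn (fun t => ‖g t‖ ^ 2) (Icc 0 T))
    (hf : ∀ t ∈ Icc (0 : ℝ) T, f t = f 0 + ∫ s in (0 : ℝ)..t, g s) {s t : ℝ}
    (hs : s ∈ Icc 0 T) (ht : t ∈ Icc 0 T) (hst : s ≤ t) :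
    ‖f t - f s‖ ≤ (t - s) ^ (1 / 2 : ℝ) * (∫ u in (0 : ℝ)..T, ‖g u‖ ^ 2) ^ (1 / 2 : ℝ) := by
  have hsub : Ioc s t ⊆ Icc 0 T := Ioc_subset_Icc_self.trans (Icc_subset_Icc hs.1 ht.2)
  rw [sub_eq_intervalIntegral_of_eq_add_primitive hg hf hs ht,
    intervalIntegral.integral_of_le hst]
  calc ‖∫ u in Ioc s t, g u‖
      ≤ (volume.restrict (Ioc s t)).real univ ^ (1 / 2 : ℝ)
          * (∫ u in Ioc s t, ‖g u‖ ^ 2) ^ (1 / 2 : ℝ) :=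
        norm_integral_le_rpow_measureReal_mul_rpow_integral_sq_norm
          (hg.mono_set hsub).aestronglyMeasurable (hg2.mono_set hsub)
    _ ≤ (t - s) ^ (1 / 2 : ℝ) * (∫ u in (0 : ℝ)..T, ‖g u‖ ^ 2) ^ (1 / 2 : ℝ) := by
        rw [← intervalIntegral.integral_of_le hst]
        have h0T : (0 : ℝ) ≤ T := hs.1.trans hs.2
        simp only [measureReal_restrict_apply_univ, Real.volume_real_Ioc_of_le hst]
        gcongr
        · exact intervalIntegral.integral_nonneg hst fun _ _ => sq_nonneg _
        exact intervalIntegral.integral_mono_interval hs.1 hst ht.2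
          (ae_of_all _ fun _ => sq_nonneg _)
          ((intervalIntegrable_iff_integrableOn_Icc_of_le h0T).2 hg2)

theorem abs_integral_sq_norm_sub_le_of_eq_add_primitive (hg : IntegrableOn g (Icc 0 T))
    (hg2 : IntegrableOn (fun t => ‖g t‖ ^ 2) (Icc 0 T))
    (hf : ∀ t ∈ Icc (0 : ℝ) T, f t = f 0 + ∫ s in (0 : ℝ)..t, g s) {M : ℝ}
    (hfM : ∀ t ∈ Icc 0 T, ‖f t‖ ≤ M) {τ h : ℝ} (hτ : 0 ≤ τ) (hh : 0 ≤ h) (hτh : τ + h ≤ T) :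
    |(∫ t in τ..(τ + h), ‖f t‖ ^ 2) - h * ‖f τ‖ ^ 2|
      ≤ 2 * h ^ (3 / 2 : ℝ) * M * (∫ t in (0 : ℝ)..T, ‖g t‖ ^ 2) ^ (1 / 2 : ℝ) := by
  set G := (∫ t in (0 : ℝ)..T, ‖g t‖ ^ 2) ^ (1 / 2 : ℝ)
  have hG : 0 ≤ G := Real.rpow_nonneg
    (intervalIntegral.integral_nonneg (by linarith) fun _ _ => sq_nonneg _) _
  have hsub : Icc τ (τ + h) ⊆ Icc 0 T := Icc_subset_Icc hτ hτh
  have hτ_mem : τ ∈ Icc 0 T := hsub (left_mem_Icc.2 (by linarith))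
  have hM : 0 ≤ M := (norm_nonneg _).trans (hfM τ hτ_mem)
  have hincr : ∀ t ∈ Ioc τ (τ + h),
      |‖f t‖ ^ 2 - ‖f τ‖ ^ 2| ≤ 2 * M * (h ^ (1 / 2 : ℝ) * G) := by
    intro t ht
    have ht_mem : t ∈ Icc 0 T := hsub (Ioc_subset_Icc_self ht)
    calc |‖f t‖ ^ 2 - ‖f τ‖ ^ 2| ≤ 2 * M * ‖f t - f τ‖ :=
          abs_sq_norm_sub_sq_norm_le (hfM t ht_mem) (hfM τ hτ_mem)
      _ ≤ 2 * M * ((t - τ) ^ (1 / 2 : ℝ) * G) := by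
          gcongr
          exact norm_sub_le_of_eq_add_primitive hg hg2 hf hτ_mem ht_mem ht.1.le
      _ ≤ 2 * M * (h ^ (1 / 2 : ℝ) * G) := by
          gcongr
          · linarith [ht.1]
          · linarith [ht.2]
  have hint : IntervalIntegrable (fun t => ‖f t‖ ^ 2) volume τ (τ + h) :=
    (((continuousOn_of_eq_add_primitive hg hf).norm.pow 2).mono
      (uIcc_of_le (by linarith : τ ≤ τ + h) ▸ hsub)).intervalIntegrable
  have hbound := abs_intervalIntegral_sub_mul_le (by linarith) hint hincr
  rw [add_sub_cancel_left] at hbound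
  calc _ ≤ 2 * M * (h ^ (1 / 2 : ℝ) * G) * h := hbound
    _ = _ := by
        rw [show (3 / 2 : ℝ) = 1 / 2 + 1 by norm_num, Real.rpow_add' hh (by norm_num),
          Real.rpow_one]
        ring

end Primitive

theorem sq_norm_integral_increment_estimate_general
    {H : Type*} [NormedAddCommGroup H] [InnerProductSpace ℝ H]
    (T : ℝ) (g f : ℝ → H) (M : ℝ)
    (hg : IntegrableOn g (Set.Icc 0 T))
    (hg2 : IntegrableOn (fun t => ‖g t‖ ^ 2) (Set.Icc 0 T))
    (hf : ∀ t ∈ Set.Icc (0 : ℝ) T, f t = f 0 + ∫ s in (0 : ℝ)..t, g s)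
    (hM : M = ⨆ t : Set.Icc (0 : ℝ) T, ‖f (t : ℝ)‖) :
    ∀ τ h : ℝ, 0 ≤ τ → 0 ≤ h → τ + h ≤ T →
      |(∫ t in τ..(τ + h), ‖f t‖ ^ 2) - h * ‖f τ‖ ^ 2|
        ≤ 2 * h ^ ((3 : ℝ) / 2) * M * (∫ t in (0 : ℝ)..T, ‖g t‖ ^ 2) ^ ((1 : ℝ) / 2) := by
  intro τ h hτ hh hτh
  have hfM : ∀ t ∈ Icc 0 T, ‖f t‖ ≤ M := fun t ht =>
    hM ▸ isCompact_Icc.norm_le_iSup_of_continuousOn (continuousOn_of_eq_add_primitive hg hf) ht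
  exact abs_integral_sq_norm_sub_le_of_eq_add_primitive hg hg2 hf hfM hτ hh hτh

/-- Quantitative estimate showing that `τ ↦ ∫₀^τ ‖f(t)‖² dt` is differentiable with
derivative `‖f(τ)‖²` when `f` is the indefinite Bochner integral of a square integrable
function `g`. -/
theorem sq_norm_integral_increment_estimate
    {H : Type*} [NormedAddCommGroup H] [InnerProductSpace ℝ H] [CompleteSpace H]
    (T : ℝ) (hT : 0 < T) (g f : ℝ → H) (M : ℝ)
    (hg : IntegrableOn g (Set.Icc 0 T))
    (hg2 : IntegrableOn (fun t => ‖g t‖ ^ 2) (Set.Icc 0 T))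
    (hf : ∀ t ∈ Set.Icc (0 : ℝ) T, f t = f 0 + ∫ s in (0 : ℝ)..t, g s)
    (hM : M = ⨆ t : Set.Icc (0 : ℝ) T, ‖f (t : ℝ)‖) :
    ∀ τ h : ℝ, 0 ≤ τ → 0 ≤ h → τ + h ≤ T →
      |(∫ t in τ..(τ + h), ‖f t‖ ^ 2) - h * ‖f τ‖ ^ 2|
        ≤ 2 * h ^ ((3 : ℝ) / 2) * M * (∫ t in (0 : ℝ)..T, ‖g t‖ ^ 2) ^ ((1 : ℝ) / 2) :=
  sq_norm_integral_increment_estimate_general T g f M hg hg2 hf hM
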